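/- arXiv:1707.04075 — 2 statements merged into one kernel-verified Lean document; each statement's English description precedes it below -/
import Mathlib

section
/- Let λ be a partition of n, let O be a multiset of powers of p summing to n, and let P be a p-subgroup of the symmetric group S_n whose orbit type on {1,…,n} is O. Then O is a rearrangement of a refinement of O_λ if and only if P is conjugate in S_n to a subgroup of P_λ. -/
open scoped BigOperators

/-! ## Brauer construction for representations of finite groups -/

section Brauer

variable {F : Type} [Field F] {G : Type} [Group G]
variable {V : Type} [AddCommGroup V] [Module F V]

/-- The submodule of `P`-fixed points of a representation. -/
def repFixed (ρ : Representation F G V) (P : Subgroup G) : Submodule F V where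
  carrier := {v | ∀ g ∈ P, ρ g v = v}
  add_mem' := by
    intro a b ha hb g hg
    simp [map_add, ha g hg, hb g hg]
  zero_mem' := by
    intro g hg
    simp
  smul_mem' := by
    intro c v hv g hg
    simp [map_smul, hv g hg]

/-- The relative trace map `Tr_Q^P` (as a bare function, summing over a set of
left coset representatives of `Q` in `P`). -/
noncomputable def relTrace [Finite G] (ρ : Representation F G V) (P Q : Subgroup G)
    (v : V) : V := by
  classical
  have : Fintype (P ⧸ Q.subgroupOf P) := Fintype.ofFinite _
  exact ∑ x : P ⧸ Q.subgroupOf P, ρ ((Quotient.out x : ↥P) : G) v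

/-- The subspace `Tr^P(M) = Σ_{Q < P} Tr_Q^P (M^Q)` (as a submodule of `V`). -/
noncomputable def brauerTraceSub [Finite G] (ρ : Representation F G V) (P : Subgroup G) :
    Submodule F V :=
  Submodule.span F {w | ∃ Q : Subgroup G, Q < P ∧ ∃ v ∈ repFixed ρ Q, w = relTrace ρ P Q v}

/-- The dimension of the Brauer construction `M(P) = M^P / Tr^P(M)`. -/
noncomputable def brauerDim [Finite G] (ρ : Representation F G V) (P : Subgroup G) : ℕ :=
  Module.finrank F
    (↥(repFixed ρ P) ⧸ ((brauerTraceSub ρ P).comap (repFixed ρ P).subtype))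

/-- `σ` is (isomorphic to) a direct summand of `ρ`: there is an equivariant split
injection of `σ` into `ρ`. -/
def IsRepSummand {W : Type} [AddCommGroup W] [Module F W]
    (ρ : Representation F G V) (σ : Representation F G W) : Prop :=
  ∃ (ι : W →ₗ[F] V) (π : V →ₗ[F] W),
    (∀ g w, ι (σ g w) = ρ g (ι w)) ∧ (∀ g v, π (ρ g v) = σ g (π v)) ∧ ∀ w, π (ι w) = w

/-- A representation is indecomposable: nonzero, and admitting no nontrivial
decomposition into two invariant submodules. -/
def IsIndecomposableRep (ρ : Representation F G V) : Prop :=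
  (∃ v : V, v ≠ 0) ∧
  ∀ A B : Submodule F V, (∀ g, ∀ v ∈ A, ρ g v ∈ A) → (∀ g, ∀ v ∈ B, ρ g v ∈ B) →
    A ⊓ B = ⊥ → A ⊔ B = ⊤ → A = ⊥ ∨ B = ⊥

/-- Isomorphism of representations. -/
def RepIso {W : Type} [AddCommGroup W] [Module F W]
    (ρ : Representation F G V) (σ : Representation F G W) : Prop :=
  ∃ e : V ≃ₗ[F] W, ∀ g v, e (ρ g v) = σ g (e v)

end Brauer

/-! ## Compositions, partitions, tabloids and Young modules -/

section Young

/-- A composition of `n` as a finitely supported function `ℕ → ℕ` with sum `n`. -/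
def IsCompositionFn (c : ℕ → ℕ) (n : ℕ) : Prop :=
  (Function.support c).Finite ∧ ∑ᶠ j, c j = n

/-- A partition of `n` as a finitely supported weakly decreasing function `ℕ → ℕ`
with sum `n`. -/
def IsPartitionFn (c : ℕ → ℕ) (n : ℕ) : Prop :=
  IsCompositionFn c n ∧ Antitone c

/-- A `p`-restricted partition: all successive differences (including the last
part) are `< p`. -/
def IsPRestrictedFn (p : ℕ) (c : ℕ → ℕ) : Prop := ∀ j, c j - c (j + 1) < p

/-- The dominance order: `Dominates lam mu` means `lam ⊵ mu`. -/
def Dominates (lam mu : ℕ → ℕ) : Prop :=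
  ∀ N, ∑ j ∈ Finset.range N, mu j ≤ ∑ j ∈ Finset.range N, lam j

/-- Strict dominance `lam ⊳ mu`. -/
def StrictDominates (lam mu : ℕ → ℕ) : Prop := Dominates lam mu ∧ lam ≠ mu

/-- A `c`-tabloid: a tuple of pairwise disjoint subsets of `{1,…,n}` covering
everything, the `j`-th of size `c j`. -/
structure Tabloid (n : ℕ) (c : ℕ → ℕ) where
  row : ℕ → Finset (Fin n)
  disj : ∀ i j, i ≠ j → Disjoint (row i) (row j)
  card_row : ∀ j, (row j).card = c j
  cover : ∀ x, ∃ j, x ∈ row j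

theorem Tabloid.ext' {n : ℕ} {c : ℕ → ℕ} {T S : Tabloid n c} (h : T.row = S.row) :
    T = S := by
  cases T; cases S; simp_all

/-- The natural action of the symmetric group on tabloids. -/
instance {n : ℕ} {c : ℕ → ℕ} : MulAction (Equiv.Perm (Fin n)) (Tabloid n c) where
  smul σ T :=
    { row := fun j => (T.row j).image σ
      disj := fun i j h => (Finset.disjoint_image σ.injective).mpr (T.disj i j h)
      card_row := fun j => by
        rw [Finset.card_image_of_injective _ σ.injective, T.card_row]
      cover := fun x => by
        obtain ⟨j, hj⟩ := T.cover (σ⁻¹ x)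
        exact ⟨j, Finset.mem_image.mpr ⟨σ⁻¹ x, hj, by simp⟩⟩ }
  one_smul T := Tabloid.ext' (by funext j; exact Finset.image_id)
  mul_smul a b T := Tabloid.ext' (by
    funext j
    show Finset.image (⇑(a * b)) _ = Finset.image ⇑a (Finset.image ⇑b _)
    rw [Finset.image_image]
    rfl)

/-- The Young permutation module `M^c`, as the permutation representation of
`S_n` on the free `F`-module on the set of `c`-tabloids. -/
noncomputable def youngRep (F : Type) [Field F] (n : ℕ) (c : ℕ → ℕ) :
    Representation F (Equiv.Perm (Fin n)) (Tabloid n c →₀ F) where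
  toFun g := Finsupp.lmapDomain F F (g • ·)
  map_one' := by ext; simp
  map_mul' x y := by ext; simp [mul_smul]

/-- `ρ` is a Young module `Y^lam`: an indecomposable direct summand of `M^lam`
which is not a direct summand of any `M^mu` with `mu ⊳ lam`. -/
def IsYoungModuleFor (F : Type) [Field F] (n : ℕ) (lam : ℕ → ℕ)
    {V : Type} [AddCommGroup V] [Module F V]
    (ρ : Representation F (Equiv.Perm (Fin n)) V) : Prop :=
  IsIndecomposableRep ρ ∧ IsRepSummand (youngRep F n lam) ρ ∧
  ∀ mu : ℕ → ℕ, IsPartitionFn mu n → StrictDominates mu lam →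
    ¬ IsRepSummand (youngRep F n mu) ρ

end Young

/-! ## Orbit types, Young subgroups and related combinatorics -/

section Orbits

/-- The orbit type of a subgroup `P ≤ S_n`: the multiset of cardinalities of
the orbits of `P` on `{1,…,n}`. -/
noncomputable def orbitType (n : ℕ) (P : Subgroup (Equiv.Perm (Fin n))) : Multiset ℕ := by
  classical
  exact (Finset.univ.image fun x : Fin n => MulAction.orbit P x).val.map fun s => s.ncard

/-- The multiset of (nonempty) fiber sizes of a labelling `f : {1,…,n} → ℕ`;
the fibers of `f` are the blocks of a set partition of `{1,…,n}`. -/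
noncomputable def fiberSizes {n : ℕ} (f : Fin n → ℕ) : Multiset ℕ := by
  classical
  exact (Finset.univ.image f).val.map fun j => (Finset.univ.filter fun x => f x = j).card

/-- The subgroup of permutations preserving each fiber (block) of the
labelling `f`; for an interval labelling this is a Young subgroup. -/
def blockStabilizer (n : ℕ) (f : Fin n → ℕ) : Subgroup (Equiv.Perm (Fin n)) where
  carrier := {σ | ∀ x, f (σ x) = f x}
  one_mem' := fun _ => rfl
  mul_mem' := by
    intro a b ha hb x
    rw [Equiv.Perm.mul_apply, ha, hb]
  inv_mem' := by
    intro a ha x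
    simpa using (ha (a⁻¹ x)).symm

/-- `P` is a Sylow `p`-subgroup of the subgroup `H`. -/
def IsSylowPSubgroupIn {G : Type} [Group G] (p : ℕ) (P H : Subgroup G) : Prop :=
  P ≤ H ∧ IsPGroup p P ∧ ∀ Q : Subgroup G, IsPGroup p Q → Q ≤ H → P ≤ Q → Q = P

/-- Every member of `O` is a power of `p`. -/
def IsPPowerMultiset (p : ℕ) (O : Multiset ℕ) : Prop := ∀ x ∈ O, ∃ i : ℕ, x = p ^ i

/-- `lamE 0, …, lamE s` is the `p`-adic expansion of the partition `lam`:
each `lamE i` is a `p`-restricted partition and `lam = Σ_i p^i • lamE i`. -/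
def IsPAdicExpansionOf (p : ℕ) (lam : ℕ → ℕ) (s : ℕ) (lamE : ℕ → ℕ → ℕ) : Prop :=
  (∀ i, i ≤ s →
    (Function.support (lamE i)).Finite ∧ Antitone (lamE i) ∧ IsPRestrictedFn p (lamE i)) ∧
  ∀ j, lam j = ∑ i ∈ Finset.range (s + 1), p ^ i * lamE i j

/-- The multiset `O_lam = (1^{|lam(0)|}, p^{|lam(1)|}, …, (p^s)^{|lam(s)|})`
attached to a `p`-adic expansion. -/
noncomputable def pAdicOrbitMultiset (p s : ℕ) (lamE : ℕ → ℕ → ℕ) : Multiset ℕ :=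
  ∑ i ∈ Finset.range (s + 1), Multiset.replicate (∑ᶠ j, lamE i j) (p ^ i)

/-- `O` is a rearrangement of a refinement of `O'`: `O` is a disjoint union of
submultisets, one summing to each element of `O'`. -/
def IsRefinementRearrangement (O O' : Multiset ℕ) : Prop :=
  ∃ C : Multiset (Multiset ℕ), C.map Multiset.sum = O' ∧ C.sum = O

/-- `P` is conjugate to a subgroup of `Q`. -/
def IsConjSubgroup {G : Type} [Group G] (P Q : Subgroup G) : Prop :=
  ∃ g : G, ∀ x ∈ P, g * x * g⁻¹ ∈ Q

/-- An elementary abelian `p`-subgroup. -/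
def IsElementaryAbelian (p : ℕ) {G : Type} [Group G] (E : Subgroup G) : Prop :=
  (∀ x ∈ E, x ^ p = 1) ∧ ∀ x ∈ E, ∀ y ∈ E, x * y = y * x

/-- Every row of the tabloid `T` is a union of fibers (blocks) of `f`. -/
def rowsUnionOfFibers {n : ℕ} {c : ℕ → ℕ} (f : Fin n → ℕ) (T : Tabloid n c) : Prop :=
  ∀ j x y, f x = f y → x ∈ T.row j → y ∈ T.row j

/-- The number `m_{c,O}`: the number of `c`-tabloids each of whose rows is a
union of blocks of the set partition with labelling `f`. -/
noncomputable def mNumber (n : ℕ) (c : ℕ → ℕ) (f : Fin n → ℕ) : ℕ :=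
  Nat.card {T : Tabloid n c // rowsUnionOfFibers f T}

end Orbits

/-! ## Generic Jordan types -/

section Jordan

/-- The nilpotent Jordan block of size `p` over `K`, as an endomorphism of `K^p`. -/
def jordanShift (p : ℕ) (K : Type) [Field K] : (Fin p → K) →ₗ[K] (Fin p → K) where
  toFun v := fun i => if h : i.val + 1 < p then v ⟨i.val + 1, h⟩ else 0
  map_add' x y := by
    funext i
    by_cases h : (i : ℕ) + 1 < p <;> simp [h]
  map_smul' c x := by
    funext i
    by_cases h : (i : ℕ) + 1 < p <;> simp [h]

/-- The rational function field `F(α_1, …, α_k)`. -/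
abbrev RatFuncField (F : Type) [Field F] (k : ℕ) : Type :=
  FractionRing (MvPolynomial (Fin k) F)

/-- The operator `u_α − 1 = Σ_i α_i (ρ(g_i) − 1)` on `K ⊗_F V`, where
`K = F(α_1,…,α_k)`. -/
noncomputable def uAlphaSubOne {F : Type} [Field F] {G : Type} [Group G]
    {V : Type} [AddCommGroup V] [Module F V]
    (ρ : Representation F G V) (k : ℕ) (g : Fin k → G) :
    TensorProduct F (RatFuncField F k) V →ₗ[RatFuncField F k]
      TensorProduct F (RatFuncField F k) V :=
  ∑ i : Fin k,
    (algebraMap (MvPolynomial (Fin k) F) (RatFuncField F k) (MvPolynomial.X i)) •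
      LinearMap.baseChange (RatFuncField F k) (ρ (g i) - LinearMap.id)

end Jordan

/-!
Label each point of `{1,…,n}` by its `P`-orbit. A refinement of `O_λ` by the orbit type is the
same as a way of merging `P`-orbits into blocks whose sizes are the fibre sizes of `f`, i.e. a
relabelling `h` with `h ∘ (orbit label)` and `f` having equal fibre sizes. Two labellings with
equal fibre sizes differ by a permutation `g`, and `f ∘ g` being constant on `P`-orbits says
exactly that `g P g⁻¹` lies in the Young subgroup `S_f`. Finally a `p`-group is conjugate into
`S_f` iff it is conjugate into a Sylow `p`-subgroup of `S_f`, by Sylow's theorems in `S_f`.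
-/

section

open Function Finset

theorem Multiset.exists_le_map_eq_of_map_eq_add {α β : Type*} [DecidableEq α] {w : α → β}
    {m r : Multiset β} {s : Multiset α} (h : s.map w = m + r) :
    ∃ u ≤ s, u.map w = m ∧ (s - u).map w = r := by
  induction m using Multiset.induction_on generalizing s with
  | empty => exact ⟨0, Multiset.zero_le _, Multiset.map_zero _, by simpa using h⟩
  | cons a m ih =>
    rw [Multiset.cons_add, ← Multiset.map_eq_cons] at h
    obtain ⟨b, hb, rfl, hrest⟩ := h
    obtain ⟨u, hu, rfl, hr⟩ := ih hrest
    refine ⟨b ::ₘ u, ?_, Multiset.map_cons _ _ _, ?_⟩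
    · exact (Multiset.cons_le_cons b hu).trans_eq (Multiset.cons_erase hb)
    · rwa [Multiset.sub_cons]

theorem Finset.val_map_eq_sum_singleton {ι β : Type*} (s : Finset ι) (w : ι → β) :
    s.val.map w = ∑ l ∈ s, {w l} := by
  rw [Finset.sum_eq_multiset_sum, ← Multiset.sum_map_singleton (s.val.map w), Multiset.map_map]
  rfl

theorem Finset.exists_subset_val_map_eq_of_val_map_eq_add {ι β : Type*} [DecidableEq ι]
    {s : Finset ι} {w : ι → β} {m r : Multiset β} (h : s.val.map w = m + r) :
    ∃ s₁ ⊆ s, s₁.val.map w = m ∧ (s \ s₁).val.map w = r := by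
  obtain ⟨u, hu, hm, hr⟩ := Multiset.exists_le_map_eq_of_map_eq_add h
  exact ⟨⟨u, Multiset.nodup_of_le hu s.nodup⟩, Multiset.subset_of_le hu, hm, by rwa [sdiff_val]⟩

theorem Function.Injective.factorsThrough_comp_iff {α β γ δ : Type*} {f : α → β} {g : α → γ}
    {ι : β → δ} (hι : Injective ι) : FactorsThrough g (ι ∘ f) ↔ FactorsThrough g f :=
  forall₂_congr fun _ _ => by rw [comp_apply, comp_apply, hι.eq_iff]

theorem MulAction.forall_smul_eq_iff_factorsThrough_orbit {G X Y : Type*} [Group G]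
    [MulAction G X] (F : X → Y) :
    (∀ (g : G) x, F (g • x) = F x) ↔ FactorsThrough F (orbit G) := by
  constructor
  · intro hF x y hxy
    obtain ⟨g, rfl⟩ := MulAction.orbit_eq_iff.mp hxy.symm
    exact (hF g x).symm
  · intro hF g x
    exact hF (orbit_smul g x)

theorem exists_perm_comp_eq_iff_card_fiber_eq {α γ : Type*} [Fintype α] [DecidableEq γ]
    (f g : α → γ) : (∃ e : Equiv.Perm α, ∀ x, g (e x) = f x) ↔
      ∀ c, #{x | f x = c} = #{x | g x = c} := by
  simp only [← Fintype.card_subtype]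
  constructor
  · rintro ⟨e, he⟩ c
    exact Fintype.card_congr (e.subtypeEquiv fun x => by rw [he])
  · intro hcard
    exact ⟨Equiv.ofFiberEquiv fun c => Fintype.equivOfCardEq (hcard c),
      Equiv.ofFiberEquiv_map _⟩

theorem sum_card_fiber_eq_card_fiber_comp {α β γ : Type*} [Fintype α] [DecidableEq β]
    [DecidableEq γ] (ω : α → β) (h : β → γ) (c : γ) :
    ∑ l ∈ univ.image ω with h l = c, #{x | ω x = l} = #{x | h (ω x) = c} := by
  rw [card_eq_sum_card_fiberwise (f := ω) (t := {l ∈ univ.image ω | h l = c})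
    (by intro x hx; simpa using hx)]
  refine sum_congr rfl fun l hl => ?_
  congr 1
  ext x
  simp only [mem_filter, mem_univ, true_and] at hl ⊢
  exact ⟨fun hx => ⟨hx ▸ hl.2, hx⟩, fun hx => hx.2⟩

theorem exists_mapsTo_of_isRefinementRearrangement {ι κ : Type*} [DecidableEq κ] [Nonempty κ]
    {s : Finset ι} {t : Finset κ} {w : ι → ℕ} {v : κ → ℕ}
    (hst : IsRefinementRearrangement (s.val.map w) (t.val.map v)) :
    ∃ h : ι → κ, Set.MapsTo h s t ∧ ∀ c ∈ t, ∑ l ∈ s with h l = c, w l = v c := by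
  classical
  obtain ⟨C, hCt, hCs⟩ := hst
  induction t using Finset.induction_on generalizing s C with
  | empty =>
    obtain rfl : C = 0 := by simpa using hCt
    obtain rfl : s = ∅ := by simpa [eq_comm] using hCs
    exact ⟨fun _ => Classical.arbitrary κ, by simp, by simp⟩
  | insert c t hc ih =>
    rw [insert_val_of_notMem hc, Multiset.map_cons, ← Multiset.map_eq_cons] at hCt
    obtain ⟨m, hm, hmc, hCt⟩ := hCt
    rw [← Multiset.cons_erase hm, Multiset.sum_cons] at hCs
    obtain ⟨s₁, hs₁, hs₁m, hs₂⟩ := exists_subset_val_map_eq_of_val_map_eq_add hCs.symm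
    obtain ⟨h, hmaps, hsum⟩ := ih _ hCt hs₂.symm
    refine ⟨fun l => if l ∈ s₁ then c else h l, ?_, ?_⟩
    · intro l hl
      by_cases hl₁ : l ∈ s₁
      · simp [hl₁]
      · simp [hl₁, hmaps (mem_sdiff.mpr ⟨hl, hl₁⟩)]
    · have hne : ∀ l ∈ s \ s₁, h l ≠ c := fun l hl hlc => hc (hlc ▸ hmaps hl)
      intro c' hc'
      rcases mem_insert.mp hc' with rfl | hc'
      · have hfilter : {l ∈ s | (if l ∈ s₁ then c' else h l) = c'} = s₁ := by
          ext l
          by_cases hl₁ : l ∈ s₁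
          · simp [hl₁, hs₁ hl₁]
          · simpa [hl₁] using fun hl => hne l (mem_sdiff.mpr ⟨hl, hl₁⟩)
        rw [hfilter, sum_eq_multiset_sum, hs₁m, hmc]
      · have hfilter : {l ∈ s | (if l ∈ s₁ then c else h l) = c'} = {l ∈ s \ s₁ | h l = c'} := by
          ext l
          by_cases hl₁ : l ∈ s₁
          · simpa [hl₁] using fun _ (h' : c = c') => hc (h' ▸ hc')
          · simp [hl₁]
        rw [hfilter, hsum c' hc']

theorem isRefinementRearrangement_of_mapsTo {ι κ : Type*} [DecidableEq κ]
    {s : Finset ι} {t : Finset κ} {w : ι → ℕ} {v : κ → ℕ} {h : ι → κ}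
    (hmaps : Set.MapsTo h s t) (hsum : ∀ c ∈ t, ∑ l ∈ s with h l = c, w l = v c) :
    IsRefinementRearrangement (s.val.map w) (t.val.map v) := by
  refine ⟨t.val.map fun c => {l ∈ s | h l = c}.val.map w, ?_, ?_⟩
  · rw [Multiset.map_map]
    refine Multiset.map_congr rfl fun c hc => ?_
    rw [comp_apply, ← hsum c hc, sum_eq_multiset_sum]
  · rw [← sum_eq_multiset_sum]
    simp only [val_map_eq_sum_singleton]
    exact sum_fiberwise_of_maps_to hmaps _

theorem isRefinementRearrangement_iff_exists_mapsTo {ι κ : Type*} [DecidableEq κ] [Nonempty κ]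
    (s : Finset ι) (t : Finset κ) (w : ι → ℕ) (v : κ → ℕ) :
    IsRefinementRearrangement (s.val.map w) (t.val.map v) ↔
      ∃ h : ι → κ, Set.MapsTo h s t ∧ ∀ c ∈ t, ∑ l ∈ s with h l = c, w l = v c :=
  ⟨exists_mapsTo_of_isRefinementRearrangement,
    fun ⟨_, hmaps, hsum⟩ => isRefinementRearrangement_of_mapsTo hmaps hsum⟩

theorem isRefinementRearrangement_fiberSizes_iff {n : ℕ} (ω f : Fin n → ℕ) :
    IsRefinementRearrangement (fiberSizes ω) (fiberSizes f) ↔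
      ∃ h : ℕ → ℕ, ∀ c, #{x | h (ω x) = c} = #{x | f x = c} := by
  refine (isRefinementRearrangement_iff_exists_mapsTo _ _ _ _).trans
    (exists_congr fun h => ?_)
  simp only [sum_card_fiber_eq_card_fiber_comp]
  constructor
  · rintro ⟨hmaps, hcard⟩ c
    by_cases hc : c ∈ univ.image f
    · exact hcard c hc
    · have hf : ∀ x, f x ≠ c := fun x hx => hc (hx ▸ mem_image_of_mem f (mem_univ x))
      have hhω : ∀ x, h (ω x) ≠ c := fun x hx =>
        hc (hx ▸ hmaps (mem_image_of_mem ω (mem_univ x)))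
      rw [filter_false_of_mem fun x _ => hf x, filter_false_of_mem fun x _ => hhω x]
  · intro hcard
    refine ⟨?_, fun c _ => hcard c⟩
    intro l hl
    obtain ⟨x, -, rfl⟩ := mem_image.mp hl
    have hpos : 0 < #{y | f y = h (ω x)} := hcard (h (ω x)) ▸ card_pos.mpr ⟨x, by simp⟩
    obtain ⟨y, hy⟩ := card_pos.mp hpos
    exact mem_image.mpr ⟨y, mem_univ y, (mem_filter.mp hy).2⟩

theorem isRefinementRearrangement_fiberSizes_iff_exists_perm {n : ℕ} (ω f : Fin n → ℕ) :
    IsRefinementRearrangement (fiberSizes ω) (fiberSizes f) ↔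
      ∃ e : Equiv.Perm (Fin n), FactorsThrough (f ∘ e) ω := by
  rw [isRefinementRearrangement_fiberSizes_iff]
  constructor
  · rintro ⟨h, hcard⟩
    obtain ⟨e, he⟩ := (exists_perm_comp_eq_iff_card_fiber_eq _ f).mpr hcard
    refine ⟨e, fun x y hxy => ?_⟩
    simp only [comp_apply, he, hxy]
  · rintro ⟨e, he⟩
    refine ⟨extend ω (f ∘ e) 0, (exists_perm_comp_eq_iff_card_fiber_eq _ f).mp ⟨e, fun x => ?_⟩⟩
    exact (he.extend_apply 0 x).symm

theorem orbitType_eq_fiberSizes {n : ℕ} (P : Subgroup (Equiv.Perm (Fin n)))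
    {ι : Set (Fin n) → ℕ} (hι : Injective ι) :
    orbitType n P = fiberSizes fun x => ι (MulAction.orbit P x) := by
  classical
  have himage : univ.image (fun x => ι (MulAction.orbit P x))
      = (univ.image fun x => MulAction.orbit P x).image ι := image_image.symm
  rw [fiberSizes, orbitType, himage, image_val_of_injOn hι.injOn, Multiset.map_map]
  refine Multiset.map_congr rfl fun S hS => ?_
  obtain ⟨x₀, -, rfl⟩ := mem_image.mp (mem_val.mp hS)
  simp [hι.eq_iff, MulAction.orbit_eq_iff, Set.ncard_eq_toFinset_card']

theorem conj_mem_blockStabilizer_iff {n : ℕ} (f : Fin n → ℕ) (g π : Equiv.Perm (Fin n)) :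
    g * π * g⁻¹ ∈ blockStabilizer n f ↔ ∀ x, f (g (π x)) = f (g x) :=
  ⟨fun H x => by simpa using H (g x), fun H z => by simpa using H (g⁻¹ z)⟩

theorem IsSylowPSubgroupIn.exists_sylow {G : Type} [Group G] {p : ℕ} [Fact p.Prime]
    {Q H : Subgroup G} (hQ : IsSylowPSubgroupIn p Q H) :
    ∃ S : Sylow p H, (S : Subgroup H).map H.subtype = Q := by
  obtain ⟨hQH, hQp, hmax⟩ := hQ
  obtain ⟨S, hS⟩ := (hQp.comap_subtype (K := H)).exists_le_sylow
  refine ⟨S, hmax _ (S.isPGroup'.map _) (Subgroup.map_subtype_le _) fun x hx => ?_⟩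
  exact ⟨⟨x, hQH hx⟩, hS (Subgroup.mem_subgroupOf.mpr hx), rfl⟩

theorem IsSylowPSubgroupIn.isConjSubgroup_iff {G : Type} [Group G] [Finite G] {p : ℕ}
    [Fact p.Prime] {P Q H : Subgroup G} (hQ : IsSylowPSubgroupIn p Q H) (hP : IsPGroup p P) :
    IsConjSubgroup P H ↔ IsConjSubgroup P Q := by
  refine ⟨fun ⟨g, hg⟩ => ?_, fun ⟨g, hg⟩ => ⟨g, fun x hx => hQ.1 (hg x hx)⟩⟩
  obtain ⟨S, rfl⟩ := hQ.exists_sylow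
  obtain ⟨T, hT⟩ := ((hP.map (MulAut.conj g).toMonoidHom).comap_subtype (K := H)).exists_le_sylow
  obtain ⟨h, rfl⟩ := MulAction.exists_smul_eq H T S
  refine ⟨h * g, fun x hx => ⟨h * ⟨_, hg x hx⟩ * h⁻¹, ?_, by simp [mul_assoc]⟩⟩
  exact ⟨_, hT ⟨x, hx, rfl⟩, rfl⟩

end

theorem stmt_3_general (p : ℕ) [Fact p.Prime]
    (n : ℕ) (s : ℕ) (lamE : ℕ → ℕ → ℕ) (O : Multiset ℕ)
    (P : Subgroup (Equiv.Perm (Fin n))) (hP : IsPGroup p P)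
    (horb : orbitType n P = O)
    (f : Fin n → ℕ) (hf : fiberSizes f = pAdicOrbitMultiset p s lamE)
    (Plam : Subgroup (Equiv.Perm (Fin n)))
    (hPlam : IsSylowPSubgroupIn p Plam (blockStabilizer n f)) :
    IsRefinementRearrangement O (pAdicOrbitMultiset p s lamE) ↔ IsConjSubgroup P Plam := by
  obtain ⟨ι, hι⟩ := Countable.exists_injective_nat (Set (Fin n))
  rw [← horb, ← hf, ← hPlam.isConjSubgroup_iff hP, orbitType_eq_fiberSizes P hι,
    isRefinementRearrangement_fiberSizes_iff_exists_perm]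
  refine exists_congr fun g => ?_
  calc Function.FactorsThrough (f ∘ g) (fun x => ι (MulAction.orbit P x))
      ↔ Function.FactorsThrough (f ∘ g) (MulAction.orbit P) := hι.factorsThrough_comp_iff
    _ ↔ ∀ (π : P) x, f (g (π • x)) = f (g x) :=
      (MulAction.forall_smul_eq_iff_factorsThrough_orbit _).symm
    _ ↔ ∀ π ∈ P, g * π * g⁻¹ ∈ blockStabilizer n f := by
      simp only [conj_mem_blockStabilizer_iff, Subtype.forall]
      rfl

/-- `O` is a rearrangement of a refinement of `O_lam` iff `P` is
conjugate to a subgroup of `P_lam`. -/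
theorem stmt_3 (p : ℕ) [Fact p.Prime]
    (n : ℕ) (lam : ℕ → ℕ) (hlam : IsPartitionFn lam n)
    (s : ℕ) (lamE : ℕ → ℕ → ℕ) (hexp : IsPAdicExpansionOf p lam s lamE)
    (O : Multiset ℕ) (hO : IsPPowerMultiset p O) (hOsum : O.sum = n)
    (P : Subgroup (Equiv.Perm (Fin n))) (hP : IsPGroup p P)
    (horb : orbitType n P = O)
    (f : Fin n → ℕ) (hf : fiberSizes f = pAdicOrbitMultiset p s lamE)
    (Plam : Subgroup (Equiv.Perm (Fin n)))
    (hPlam : IsSylowPSubgroupIn p Plam (blockStabilizer n f)) :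
    IsRefinementRearrangement O (pAdicOrbitMultiset p s lamE) ↔ IsConjSubgroup P Plam :=
  stmt_3_general p n s lamE O P hP horb f hf Plam hPlam
end

section
/- Let λ be a partition of m with second part λ_2 (set λ_2 = 0 if λ has fewer than two parts), let O be a multiset of powers of p summing to m, let O' be a multiset of powers of p summing to n, and let s be a nonnegative integer with p^s > λ_2. Then m_{λ + (p^s n), O''} = m_{λ, O}, where λ + (p^s n) is the partition of m + p^s n obtained from λ by adding p^s n to its first part, and O'' is the multiset union of O and the multiset obtained by multiplying every element of O' by p^s. -/
open scoped BigOperators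

/-!
The blocks of `f3` split into blocks whose sizes form `O` and blocks of sizes `p ^ s * x`, `x ≥ 1`.
A block of the second kind is larger than every part `λ_j` with `j ≥ 1`, so in a tabloid whose rows
are unions of blocks it lies in the first row. Removing these `p ^ s * n` points from the first row
is therefore a bijection onto the `λ`-tabloids on the remaining points, and the block partition of
those points has the same block sizes as that of `f1`, hence is carried to it by a bijection.
-/

open Finset

theorem Multiset.exists_le_map_eq_of_le {α β : Type*} {F : α → β} {s : Multiset α}
    {t : Multiset β} (h : t ≤ s.map F) : ∃ s' ≤ s, s'.map F = t := by
  classical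
  induction t using Multiset.induction_on generalizing s with
  | empty => exact ⟨0, Multiset.zero_le _, rfl⟩
  | cons b t ih =>
    obtain ⟨a, ha, rfl⟩ :=
      Multiset.mem_map.mp (Multiset.mem_of_le h (Multiset.mem_cons_self _ _))
    rw [← Multiset.cons_erase ha, Multiset.map_cons, Multiset.cons_le_cons_iff] at h
    obtain ⟨s', hs', rfl⟩ := ih h
    exact ⟨a ::ₘ s', (Multiset.cons_le_cons a hs').trans (Multiset.cons_erase ha).le, by simp⟩

theorem Finset.exists_subset_map_eq_of_map_eq_add {α β : Type*} [DecidableEq α] {s : Finset α}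
    {F : α → β} {t t' : Multiset β} (h : s.val.map F = t + t') :
    ∃ u ⊆ s, u.val.map F = t ∧ (s \ u).val.map F = t' := by
  obtain ⟨v, hv, hvt⟩ := Multiset.exists_le_map_eq_of_le (h ▸ Multiset.le_add_right t t')
  refine ⟨⟨v, Multiset.nodup_of_le hv s.nodup⟩, val_le_iff.mp hv, hvt, ?_⟩
  rw [← add_tsub_cancel_of_le hv, Multiset.map_add, hvt] at h
  simpa [sdiff_val] using h

section Fibers

variable {α β γ : Type*} [Fintype α] [Fintype β] [DecidableEq γ]

def fiberCard (f : α → γ) (c : γ) : ℕ := #{a | f a = c}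

theorem fiberSizes_eq {n : ℕ} (f : Fin n → ℕ) :
    fiberSizes f = (univ.image f).val.map (fiberCard f) := rfl

theorem fiberCard_eq_card_subtype (f : α → γ) (c : γ) :
    fiberCard f c = Fintype.card {a // f a = c} :=
  (Fintype.card_subtype _).symm

theorem fiberCard_pos {f : α → γ} {c : γ} (hc : c ∈ univ.image f) : 0 < fiberCard f c := by
  obtain ⟨a, -, rfl⟩ := mem_image.mp hc
  exact card_pos.mpr ⟨a, by simp⟩

theorem exists_equiv_apply_eq_of_map_eq {F : α → γ} {G : β → γ}
    (h : univ.val.map F = univ.val.map G) : ∃ φ : α ≃ β, ∀ a, G (φ a) = F a := by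
  refine ⟨Equiv.ofFiberEquiv fun c => Fintype.equivOfCardEq ?_, Equiv.ofFiberEquiv_map _⟩
  have hc := congrArg (Multiset.count c) h
  simp only [Multiset.count_map] at hc
  simpa [Fintype.card_subtype, Finset.card, Finset.filter_val, eq_comm] using hc

theorem exists_equiv_fibers_of_fiberCards_eq {f : α → γ} {g : β → γ}
    (h : (univ.image f).val.map (fiberCard f) = (univ.image g).val.map (fiberCard g)) :
    ∃ E : α ≃ β, ∀ a a', g (E a) = g (E a') ↔ f a = f a' := by
  obtain ⟨φ, hφ⟩ := exists_equiv_apply_eq_of_map_eq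
    (F := fun c : univ.image f => fiberCard f c) (G := fun c : univ.image g => fiberCard g c)
    (by convert h using 1 <;> exact Multiset.attach_map_val' _ _)
  let f' : α → univ.image f := fun a => ⟨f a, mem_image_of_mem f (mem_univ a)⟩
  let g' : β → univ.image f := fun b => φ.symm ⟨g b, mem_image_of_mem g (mem_univ b)⟩
  have hf' (c) : Fintype.card {a // f' a = c} = fiberCard f c := by
    simp only [fiberCard_eq_card_subtype, f', Subtype.ext_iff]
  have hg' (c) : Fintype.card {b // g' b = c} = fiberCard g (φ c) := by
    simp only [fiberCard_eq_card_subtype, g', Equiv.symm_apply_eq, Subtype.ext_iff]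
  have hfib (c) : {a // f' a = c} ≃ {b // g' b = c} :=
    Fintype.equivOfCardEq <| by rw [hf', hg', hφ]
  refine ⟨Equiv.ofFiberEquiv hfib, fun a a' => ?_⟩
  have hE (a) : g' (Equiv.ofFiberEquiv hfib a) = f' a := Equiv.ofFiberEquiv_map hfib a
  calc g (Equiv.ofFiberEquiv hfib a) = g (Equiv.ofFiberEquiv hfib a')
      ↔ g' (Equiv.ofFiberEquiv hfib a) = g' (Equiv.ofFiberEquiv hfib a') := by simp [g']
    _ ↔ f a = f a' := by rw [hE, hE]; simp [f']

theorem image_subtype_eq_of_subset {g : β → γ} {u : Finset γ} (hu : u ⊆ univ.image g) :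
    univ.image (fun b : {b // g b ∈ u} => g b) = u := by
  ext c
  refine ⟨fun hc => ?_, fun hc => ?_⟩
  · obtain ⟨b, -, rfl⟩ := mem_image.mp hc
    exact b.2
  · obtain ⟨b, -, rfl⟩ := mem_image.mp (hu hc)
    exact mem_image_of_mem _ (mem_univ (⟨b, hc⟩ : {b // g b ∈ u}))

theorem fiberCard_subtype {g : β → γ} {u : Finset γ} {c : γ} (hc : c ∈ u) :
    fiberCard (fun b : {b // g b ∈ u} => g b) c = fiberCard g c := by
  rw [fiberCard_eq_card_subtype, fiberCard_eq_card_subtype]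
  exact Fintype.card_congr (Equiv.subtypeSubtypeEquivSubtype (p := fun b => g b ∈ u)
    (q := fun b => g b = c) fun h => h ▸ hc)

end Fibers

def addToRowZero (c : ℕ → ℕ) (k j : ℕ) : ℕ := if j = 0 then c 0 + k else c j

namespace Tabloid

variable {m k : ℕ} {c : ℕ → ℕ}

def extend (e : Fin m ↪ Fin (m + k)) (T : Tabloid m c) : Tabloid (m + k) (addToRowZero c k) where
  row j := if j = 0 then (T.row 0).map e ∪ (univ.map e)ᶜ else (T.row j).map e
  disj i j hij := by
    have hd (i j) (h : i ≠ j) : Disjoint ((T.row i).map e) ((T.row j).map e) :=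
      (disjoint_map e).mpr (T.disj i j h)
    have hc (i) : Disjoint ((T.row i).map e) (univ.map e)ᶜ :=
      disjoint_compl_right.mono_left (map_subset_map.mpr (subset_univ _))
    split_ifs with hi hj hj
    · exact absurd (hi.trans hj.symm) hij
    · exact disjoint_union_left.mpr ⟨hi ▸ hd i j hij, (hc j).symm⟩
    · exact disjoint_union_right.mpr ⟨hj ▸ hd i j hij, hc i⟩
    · exact hd i j hij
  card_row j := by
    unfold addToRowZero
    split_ifs
    · rw [card_union_of_disjoint (disjoint_compl_right.mono_left
        (map_subset_map.mpr (subset_univ _))), card_compl, card_map, card_map, T.card_row]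
      simp
    · rw [card_map, T.card_row]
  cover y := by
    by_cases hy : y ∈ univ.map e
    · obtain ⟨x, -, rfl⟩ := mem_map.mp hy
      obtain ⟨j, hj⟩ := T.cover x
      refine ⟨j, ?_⟩
      split_ifs with h
      · exact mem_union_left _ (mem_map_of_mem e (h ▸ hj))
      · exact mem_map_of_mem e hj
    · exact ⟨0, by simp [hy]⟩

noncomputable def restrict (e : Fin m ↪ Fin (m + k)) (U : Tabloid (m + k) (addToRowZero c k))
    (hU : (univ.map e)ᶜ ⊆ U.row 0) : Tabloid m c where
  row j := (U.row j).preimage e e.injective.injOn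
  disj i j hij := disjoint_preimage (U.disj i j hij)
  card_row j := by
    classical
    have houtside : {y ∈ U.row j | y ∉ Set.range e} = if j = 0 then (univ.map e)ᶜ else ∅ := by
      split_ifs with hj
      · subst hj
        ext y
        constructor
        · simp +contextual
        · intro hy
          exact mem_filter.mpr ⟨hU hy, by simpa using hy⟩
      · refine filter_eq_empty_iff.mpr fun y hy hye => ?_
        exact disjoint_left.mp (U.disj j 0 hj) hy (hU (by simpa using hye))
    have hsplit := card_filter_add_card_filter_not (s := U.row j) (· ∈ Set.range e)
    rw [← card_preimage _ _ e.injective.injOn, houtside, U.card_row] at hsplit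
    unfold addToRowZero at hsplit
    split_ifs at hsplit with hj
    · subst hj
      simpa [card_compl] using hsplit
    · simpa using hsplit
  cover x := (U.cover (e x)).imp fun _ hj => mem_preimage.mpr hj

theorem mem_row_zero_of_lt_fiberCard {n : ℕ} {g : Fin n → ℕ} {U : Tabloid n c}
    (hU : rowsUnionOfFibers g U) {y : Fin n} (hy : ∀ j ≠ 0, c j < fiberCard g (g y)) :
    y ∈ U.row 0 := by
  obtain ⟨j, hj⟩ := U.cover y
  rcases eq_or_ne j 0 with rfl | hj0
  · exact hj
  · have hfiber : ({z | g z = g y} : Finset _) ⊆ U.row j :=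
      fun z hz => hU j y z (mem_filter.mp hz).2.symm hj
    have := card_le_card hfiber
    rw [U.card_row] at this
    exact absurd (hy j hj0) (not_lt.mpr this)

variable {e : Fin m ↪ Fin (m + k)}

@[simp]
theorem apply_mem_extend_row {T : Tabloid m c} {x : Fin m} {j : ℕ} :
    e x ∈ (extend e T).row j ↔ x ∈ T.row j := by
  simp only [extend]
  split_ifs with hj <;> simp [hj]

theorem mem_extend_row_of_notMem_range {T : Tabloid m c} {y : Fin (m + k)}
    (hy : y ∉ Set.range e) {j : ℕ} : y ∈ (extend e T).row j ↔ j = 0 := by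
  simp only [Set.mem_range, not_exists] at hy
  simp only [extend]
  split_ifs with hj <;> simp [hj, hy]

theorem restrict_extend (T : Tabloid m c) {h} : restrict e (extend e T) h = T := by
  refine Tabloid.ext' (funext fun j => ?_)
  ext x
  simp [restrict]

theorem extend_restrict (U : Tabloid (m + k) (addToRowZero c k)) {hU} :
    extend e (restrict e U hU) = U := by
  refine Tabloid.ext' (funext fun j => ?_)
  ext y
  by_cases hy : y ∈ Set.range e
  · obtain ⟨x, rfl⟩ := hy
    simp [restrict]
  · have hy' : y ∈ (univ.map e)ᶜ := by simpa using hy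
    rw [mem_extend_row_of_notMem_range hy]
    rcases eq_or_ne j 0 with rfl | hj
    · simp [hU hy']
    · simp [hj, disjoint_left.mp (U.disj 0 j hj.symm) (hU hy')]

variable {f : Fin m → ℕ} {g : Fin (m + k) → ℕ}

theorem rowsUnionOfFibers_extend {T : Tabloid m c}
    (he : ∀ x x', g (e x) = g (e x') ↔ f x = f x')
    (hsat : ∀ y y', g y = g y' → y ∈ Set.range e → y' ∈ Set.range e)
    (hT : rowsUnionOfFibers f T) : rowsUnionOfFibers g (extend e T) := by
  intro j y y' hyy' hy
  by_cases hr : y ∈ Set.range e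
  · obtain ⟨x, rfl⟩ := hr
    obtain ⟨x', rfl⟩ := hsat _ _ hyy' ⟨x, rfl⟩
    rw [apply_mem_extend_row] at hy ⊢
    exact hT j x x' ((he x x').mp hyy') hy
  · have hr' : y' ∉ Set.range e := fun h => hr (hsat _ _ hyy'.symm h)
    rw [mem_extend_row_of_notMem_range hr] at hy
    rwa [mem_extend_row_of_notMem_range hr']

theorem rowsUnionOfFibers_restrict {U : Tabloid (m + k) (addToRowZero c k)} {hU}
    (he : ∀ x x', g (e x) = g (e x') ↔ f x = f x')
    (hU' : rowsUnionOfFibers g U) : rowsUnionOfFibers f (restrict e U hU) := by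
  intro j x x' hxx' hx
  simp only [restrict, mem_preimage] at hx ⊢
  exact hU' j _ _ ((he x x').mpr hxx') hx

end Tabloid

theorem mNumber_addToRowZero_of_embedding {m k : ℕ} {c : ℕ → ℕ} {f : Fin m → ℕ}
    {g : Fin (m + k) → ℕ} (e : Fin m ↪ Fin (m + k))
    (he : ∀ x x', g (e x) = g (e x') ↔ f x = f x')
    (hsat : ∀ y y', g y = g y' → y ∈ Set.range e → y' ∈ Set.range e)
    (hbig : ∀ y ∉ Set.range e, ∀ j ≠ 0, c j < fiberCard g (g y)) :
    mNumber (m + k) (addToRowZero c k) g = mNumber m c f := by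
  have hnew {U : Tabloid (m + k) (addToRowZero c k)} (hU : rowsUnionOfFibers g U) :
      (univ.map e)ᶜ ⊆ U.row 0 := fun y hy =>
    U.mem_row_zero_of_lt_fiberCard hU fun j hj => by
      simpa [addToRowZero, hj] using hbig y (by simpa using hy) j hj
  exact Nat.card_congr
    { toFun := fun U => ⟨U.1.restrict e (hnew U.2), Tabloid.rowsUnionOfFibers_restrict he U.2⟩
      invFun := fun T => ⟨T.1.extend e, Tabloid.rowsUnionOfFibers_extend he hsat T.2⟩
      left_inv := fun U => Subtype.ext (Tabloid.extend_restrict (hU := hnew U.2) _)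
      right_inv := fun T => Subtype.ext <|
        Tabloid.restrict_extend (h := hnew (Tabloid.rowsUnionOfFibers_extend he hsat T.2)) _ }

theorem stmt_15_general (p : ℕ) (m n s : ℕ)
    (lam : ℕ → ℕ) (hlam : IsPartitionFn lam m) (hs : lam 1 < p ^ s)
    (O O' : Multiset ℕ)
    (f1 : Fin m → ℕ) (hf1 : fiberSizes f1 = O)
    (f3 : Fin (m + p ^ s * n) → ℕ)
    (hf3 : fiberSizes f3 = O + O'.map (fun x => p ^ s * x)) :
    mNumber (m + p ^ s * n)
        (fun j => if j = 0 then lam 0 + p ^ s * n else lam j) f3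
      = mNumber m lam f1 := by
  rw [fiberSizes_eq] at hf1 hf3
  obtain ⟨u, hu, hold, hnew⟩ := exists_subset_map_eq_of_map_eq_add hf3
  obtain ⟨E, hE⟩ := exists_equiv_fibers_of_fiberCards_eq
      (f := f1) (g := fun y : {y // f3 y ∈ u} => f3 y) <| by
    rw [hf1, image_subtype_eq_of_subset hu, ← hold]
    exact Multiset.map_congr rfl fun c hc => (fiberCard_subtype hc).symm
  let e := E.toEmbedding.trans (Function.Embedding.subtype _)
  have hrange (y) : y ∈ Set.range e ↔ f3 y ∈ u :=
    ⟨fun ⟨x, hx⟩ => hx ▸ (E x).2, fun hy => ⟨E.symm ⟨y, hy⟩, by simp [e]⟩⟩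
  refine mNumber_addToRowZero_of_embedding e hE (fun y y' hyy' => by simp [hrange, hyy'])
    fun y hy j hj => ?_
  have hmem : fiberCard f3 (f3 y) ∈ O'.map (p ^ s * ·) := by
    rw [← hnew]
    exact Multiset.mem_map_of_mem _
      (mem_sdiff.mpr ⟨mem_image_of_mem f3 (mem_univ y), (hrange y).not.mp hy⟩)
  obtain ⟨x, -, hx⟩ := Multiset.mem_map.mp hmem
  have hpos := fiberCard_pos (mem_image_of_mem f3 (mem_univ y))
  calc lam j ≤ lam 1 := hlam.2 (Nat.one_le_iff_ne_zero.mpr hj)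
    _ < p ^ s := hs
    _ ≤ fiberCard f3 (f3 y) :=
      hx ▸ Nat.le_mul_of_pos_right _ (Nat.pos_of_mul_pos_left (hx ▸ hpos))

/-- `m_{lam + (p^s n), O''} = m_{lam, O}` when `p^s > lam_2`. -/
theorem stmt_15 (p : ℕ) [Fact p.Prime] (m n s : ℕ)
    (lam : ℕ → ℕ) (hlam : IsPartitionFn lam m) (hs : lam 1 < p ^ s)
    (O O' : Multiset ℕ) (hO : IsPPowerMultiset p O) (hO' : IsPPowerMultiset p O')
    (hOm : O.sum = m) (hOn : O'.sum = n)
    (f1 : Fin m → ℕ) (hf1 : fiberSizes f1 = O)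
    (f3 : Fin (m + p ^ s * n) → ℕ)
    (hf3 : fiberSizes f3 = O + O'.map (fun x => p ^ s * x)) :
    mNumber (m + p ^ s * n)
        (fun j => if j = 0 then lam 0 + p ^ s * n else lam j) f3
      = mNumber m lam f1 :=
  stmt_15_general p m n s lam hlam hs O O' f1 hf1 f3 hf3
end
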